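/- arXiv:2305.03910 — 3 statements merged into one kernel-verified Lean document; each statement's English description precedes it below -/
import Mathlib

section
/- Let (f_n)_{n∈ℤ} be a sequence of invertible linear maps between finite-dimensional inner product spaces with uniformly bounded norms ‖f_n‖, ‖f_n^{-1}‖ ≤ C. Suppose each space splits as E_n ⊕ F_n with f_n(E_n) = E_{n+1}, f_n(F_n) = F_{n+1}, and (2η)-domination: ‖f_n|_{E_n}‖ · ‖f_n^{-1}|_{F_{n+1}}‖ ≤ e^{-2η} for all n. If there exists m ≥ 0 such that ∏_{i=0}^{k-1} ‖f_{m+i}|_{E_{m+i}}‖ ≤ e^{-kη} for all k ≥ 1, and there exists m' ≤ 0 such that ∏_{i=0}^{k-1} ‖f_{m'-i-1}^{-1}|_{F_{m'-i}}‖ ≤ e^{-kη} for all k ≥ 1, then there exists an index j such that both ∏_{i=0}^{k-1} ‖f_{j+i}|_{E_{j+i}}‖ ≤ e^{-kη} for all k ≥ 1 and ∏_{i=0}^{k-1} ‖f_{j-i-1}^{-1}|_{F_{j-i}}‖ ≤ e^{-kη} for all k ≥ 1. -/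
/-!
Write `Aₖ(p)`, `Bₖ(p)` for the products of the forward, resp. backward, norms over the window
`p, …, p + k - 1`. Among the `F`-Pliss indices `≤ m` (there is one, `m'`) take the largest, `j`.
No index in `(j, m]` is `F`-Pliss while `j` is, and a strong induction on the window length
shows that every window starting at `j` and ending by `m` has `Bₖ(j) ≥ e^{-kη}`. Domination turns
this into `Aₖ(j) ≤ e^{-kη}` on the same windows, and concatenating with the `E`-Pliss index `m`
makes `j` `E`-Pliss as well.
-/

open Finset

/-- The norm of the linear map `f n` restricted to the subspace `E n`. -/
noncomputable def fwdNorm {V : ℤ → Type*} [∀ n, NormedAddCommGroup (V n)]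
    [∀ n, InnerProductSpace ℝ (V n)]
    (f : ∀ n : ℤ, V n ≃L[ℝ] V (n + 1)) (E : ∀ n : ℤ, Submodule ℝ (V n)) (n : ℤ) : ℝ :=
  ‖(f n).toContinuousLinearMap.comp (E n).subtypeL‖

/-- The norm of the inverse `(f n)⁻¹` restricted to the subspace `F (n+1)`. -/
noncomputable def bwdNorm {V : ℤ → Type*} [∀ n, NormedAddCommGroup (V n)]
    [∀ n, InnerProductSpace ℝ (V n)]
    (f : ∀ n : ℤ, V n ≃L[ℝ] V (n + 1)) (F : ∀ n : ℤ, Submodule ℝ (V n)) (n : ℤ) : ℝ :=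
  ‖(f n).symm.toContinuousLinearMap.comp (F (n + 1)).subtypeL‖

namespace Pliss

variable {a b : ℤ → ℝ} {c : ℝ}

def IsForwardPliss (a : ℤ → ℝ) (c : ℝ) (j : ℤ) : Prop :=
  ∀ k : ℕ, ∏ i ∈ range k, a (j + i) ≤ c ^ k

def IsBackwardPliss (b : ℤ → ℝ) (c : ℝ) (j : ℤ) : Prop :=
  ∀ k : ℕ, ∏ i ∈ range k, b (j - k + i) ≤ c ^ k

theorem prod_range_add_shift {M : Type*} [CommMonoid M] (g : ℤ → M) (p : ℤ) (k l : ℕ) :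
    ∏ i ∈ range (k + l), g (p + i) = (∏ i ∈ range k, g (p + i)) * ∏ i ∈ range l, g (p + k + i) := by
  rw [prod_range_add]
  push_cast
  simp only [add_assoc]

theorem prod_range_sub_sub_one {M : Type*} [CommMonoid M] (g : ℤ → M) (j : ℤ) (k : ℕ) :
    ∏ i ∈ range k, g (j - i - 1) = ∏ i ∈ range k, g (j - k + i) := by
  rw [← prod_range_reflect]
  refine prod_congr rfl fun i hi => congr_arg g ?_
  rw [mem_range] at hi
  omega

theorem prod_le_pow_of_mul_le_sq {ι : Type*} {s : Finset ι} {a b : ι → ℝ}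
    (ha : ∀ i ∈ s, 0 ≤ a i) (hb : ∀ i ∈ s, 0 ≤ b i) (hc : 0 < c)
    (hab : ∀ i ∈ s, a i * b i ≤ c ^ 2) (hB : c ^ s.card ≤ ∏ i ∈ s, b i) :
    ∏ i ∈ s, a i ≤ c ^ s.card := by
  refine le_of_mul_le_mul_left ?_ (pow_pos hc s.card)
  calc c ^ s.card * ∏ i ∈ s, a i
      ≤ (∏ i ∈ s, b i) * ∏ i ∈ s, a i := by gcongr; exact prod_nonneg ha
    _ = ∏ i ∈ s, a i * b i := by rw [mul_comm, prod_mul_distrib]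
    _ ≤ ∏ _i ∈ s, c ^ 2 := prod_le_prod (fun i hi => mul_nonneg (ha i hi) (hb i hi)) hab
    _ = c ^ s.card * c ^ s.card := by rw [prod_const]; ring

theorem pow_le_prod_of_isBackwardPliss (hb : ∀ n, 0 ≤ b n) (hc : 0 < c) {j : ℤ} {d : ℕ}
    (hj : IsBackwardPliss b c j)
    (hnot : ∀ k : ℕ, 0 < k → k ≤ d → ¬ IsBackwardPliss b c (j + k)) :
    ∀ k ≤ d, c ^ k ≤ ∏ i ∈ range k, b (j + i) := by
  intro k
  induction k using Nat.strong_induction_on with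
  | _ k ih =>
  intro hkd
  rcases Nat.eq_zero_or_pos k with rfl | hk
  · simp
  obtain ⟨r, hr⟩ : ∃ r : ℕ, c ^ r < ∏ i ∈ range r, b (j + k - r + i) := by
    simpa [IsBackwardPliss] using hnot k hk hkd
  -- The window `[j + k - r, j + k)` witnessing that `j + k` is not Pliss either starts inside
  -- `[j, j + k)`, and the induction hypothesis covers what precedes it, or it starts before `j`,
  -- and the Pliss property of `j` bounds the part before `j`.
  rcases le_total r k with hrk | hkr
  · obtain ⟨e, rfl⟩ := Nat.exists_eq_add_of_le' hrk
    rcases Nat.eq_zero_or_pos r with rfl | hr0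
    · simp at hr
    have hstart : j + ((e + r : ℕ) : ℤ) - r = j + e := by push_cast; ring
    rw [hstart] at hr
    rw [prod_range_add_shift, pow_add]
    exact mul_le_mul (ih e (by omega) (by omega)) hr.le (pow_nonneg hc.le r)
      (prod_nonneg fun i _ => hb _)
  · obtain ⟨e, rfl⟩ := Nat.exists_eq_add_of_le' hkr
    have hstart : j + k - ((e + k : ℕ) : ℤ) = j - e := by push_cast; ring
    rw [hstart, prod_range_add_shift, sub_add_cancel, pow_add] at hr
    refine (lt_of_mul_lt_mul_left ?_ (pow_nonneg hc.le e)).le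
    calc c ^ e * c ^ k < (∏ i ∈ range e, b (j - e + i)) * ∏ i ∈ range k, b (j + i) := hr
      _ ≤ c ^ e * ∏ i ∈ range k, b (j + i) := by
        gcongr
        · exact prod_nonneg fun i _ => hb _
        · exact hj e

theorem IsForwardPliss.of_prod_le_of_add (ha : ∀ n, 0 ≤ a n) (hc : 0 ≤ c) {j : ℤ} {d : ℕ}
    (hle : ∀ k ≤ d, ∏ i ∈ range k, a (j + i) ≤ c ^ k) (hd : IsForwardPliss a c (j + d)) :
    IsForwardPliss a c j := by
  intro k
  rcases le_total k d with hkd | hdk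
  · exact hle k hkd
  obtain ⟨l, rfl⟩ := Nat.exists_eq_add_of_le hdk
  rw [prod_range_add_shift, pow_add]
  exact mul_le_mul (hle d le_rfl) (hd l) (prod_nonneg fun i _ => ha _) (pow_nonneg hc d)

theorem exists_isForwardPliss_and_isBackwardPliss (ha : ∀ n, 0 ≤ a n) (hb : ∀ n, 0 ≤ b n)
    (hc : 0 < c) (hab : ∀ n, a n * b n ≤ c ^ 2) {m m' : ℤ} (hm'm : m' ≤ m)
    (hm : IsForwardPliss a c m) (hm' : IsBackwardPliss b c m') :
    ∃ j, IsForwardPliss a c j ∧ IsBackwardPliss b c j := by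
  obtain ⟨j, ⟨hj, hjm⟩, hmax⟩ := Int.exists_greatest_of_bdd
    (P := fun z => IsBackwardPliss b c z ∧ z ≤ m) ⟨m, fun _ hz => hz.2⟩ ⟨m', hm', hm'm⟩
  obtain ⟨d, rfl⟩ : ∃ d : ℕ, m = j + d := ⟨(m - j).toNat, by omega⟩
  have hgrow := pow_le_prod_of_isBackwardPliss (d := d) hb hc hj fun k hk hkd hk' => by
    have := hmax _ ⟨hk', by omega⟩
    omega
  refine ⟨j, IsForwardPliss.of_prod_le_of_add ha hc.le (fun k hkd => ?_) hm, hj⟩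
  simpa using prod_le_pow_of_mul_le_sq (s := range k) (a := fun i => a (j + i))
    (b := fun i => b (j + i)) (fun _ _ => ha _) (fun _ _ => hb _) hc (fun _ _ => hab _)
    (by simpa using hgrow k hkd)

theorem exp_neg_mul_eq_pow (η : ℝ) (k : ℕ) : Real.exp (-(k : ℝ) * η) = Real.exp (-η) ^ k := by
  rw [← Real.exp_nat_mul]
  ring_nf

theorem isForwardPliss_exp_iff {η : ℝ} {j : ℤ} :
    IsForwardPliss a (Real.exp (-η)) j ↔
      ∀ k : ℕ, 1 ≤ k → ∏ i ∈ range k, a (j + i) ≤ Real.exp (-(k : ℝ) * η) := by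
  simp only [IsForwardPliss, exp_neg_mul_eq_pow]
  refine ⟨fun h k _ => h k, fun h k => ?_⟩
  rcases Nat.eq_zero_or_pos k with rfl | hk
  exacts [by simp, h k hk]

theorem isBackwardPliss_exp_iff {η : ℝ} {j : ℤ} :
    IsBackwardPliss b (Real.exp (-η)) j ↔
      ∀ k : ℕ, 1 ≤ k → ∏ i ∈ range k, b (j - i - 1) ≤ Real.exp (-(k : ℝ) * η) := by
  simp only [IsBackwardPliss, exp_neg_mul_eq_pow, prod_range_sub_sub_one]
  refine ⟨fun h k _ => h k, fun h k => ?_⟩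
  rcases Nat.eq_zero_or_pos k with rfl | hk
  exacts [by simp, h k hk]

end Pliss

theorem exists_biPliss_index_general {V : ℤ → Type*} [∀ n, NormedAddCommGroup (V n)]
    [∀ n, InnerProductSpace ℝ (V n)]
    (f : ∀ n : ℤ, V n ≃L[ℝ] V (n + 1)) (E F : ∀ n : ℤ, Submodule ℝ (V n))
    (η : ℝ)
    -- (2η)-domination
    (hdom : ∀ n, fwdNorm f E n * bwdNorm f F n ≤ Real.exp (-(2 * η)))
    -- a forward E-Pliss index m ≥ 0
    (m : ℤ) (hm : 0 ≤ m)
    (hfwd : ∀ k : ℕ, 1 ≤ k →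
      ∏ i ∈ Finset.range k, fwdNorm f E (m + (i : ℤ)) ≤ Real.exp (-(k : ℝ) * η))
    -- a backward F-Pliss index m' ≤ 0
    (m' : ℤ) (hm' : m' ≤ 0)
    (hbwd : ∀ k : ℕ, 1 ≤ k →
      ∏ i ∈ Finset.range k, bwdNorm f F (m' - (i : ℤ) - 1) ≤ Real.exp (-(k : ℝ) * η)) :
    ∃ j : ℤ,
      (∀ k : ℕ, 1 ≤ k →
        ∏ i ∈ Finset.range k, fwdNorm f E (j + (i : ℤ)) ≤ Real.exp (-(k : ℝ) * η)) ∧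
      (∀ k : ℕ, 1 ≤ k →
        ∏ i ∈ Finset.range k, bwdNorm f F (j - (i : ℤ) - 1) ≤ Real.exp (-(k : ℝ) * η)) := by
  have hsq : Real.exp (-(2 * η)) = Real.exp (-η) ^ 2 := by
    rw [← Real.exp_nat_mul]
    ring_nf
  obtain ⟨j, hjE, hjF⟩ := Pliss.exists_isForwardPliss_and_isBackwardPliss
    (a := fwdNorm f E) (b := bwdNorm f F)
    (fun _ => by unfold fwdNorm; positivity) (fun _ => by unfold bwdNorm; positivity)
    (Real.exp_pos (-η)) (fun n => (hdom n).trans_eq hsq) (hm'.trans hm)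
    (Pliss.isForwardPliss_exp_iff.2 hfwd) (Pliss.isBackwardPliss_exp_iff.2 hbwd)
  exact ⟨j, Pliss.isForwardPliss_exp_iff.1 hjE, Pliss.isBackwardPliss_exp_iff.1 hjF⟩

/-- the Pliss–Pujals–Sambarino criterion for the existence of bi-Pliss
indices, for a sequence of invertible linear maps between finite-dimensional inner product
spaces with uniformly bounded norms, preserving a `2η`-dominated splitting `E_n ⊕ F_n`:
if some forward index `m ≥ 0` is `E`-Pliss and some backward index `m' ≤ 0` is `F`-Pliss,
then some index `j` is bi-Pliss. -/
theorem exists_biPliss_index {V : ℤ → Type*} [∀ n, NormedAddCommGroup (V n)]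
    [∀ n, InnerProductSpace ℝ (V n)] [∀ n, FiniteDimensional ℝ (V n)]
    (f : ∀ n : ℤ, V n ≃L[ℝ] V (n + 1)) (E F : ∀ n : ℤ, Submodule ℝ (V n))
    (C η : ℝ) (hη : 0 < η) (hC : 0 < C)
    -- uniformly bounded norms
    (hbdd : ∀ n, ‖(f n).toContinuousLinearMap‖ ≤ C ∧ ‖(f n).symm.toContinuousLinearMap‖ ≤ C)
    -- each space splits as E_n ⊕ F_n
    (hcompl : ∀ n, IsCompl (E n) (F n))
    (hdimE : ∀ n m : ℤ, Module.finrank ℝ (E n) = Module.finrank ℝ (E m))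
    (hdimF : ∀ n m : ℤ, Module.finrank ℝ (F n) = Module.finrank ℝ (F m))
    -- invariance of the splitting
    (hEinv : ∀ n, (E n).map ((f n).toLinearEquiv.toLinearMap) = E (n + 1))
    (hFinv : ∀ n, (F n).map ((f n).toLinearEquiv.toLinearMap) = F (n + 1))
    -- (2η)-domination
    (hdom : ∀ n, fwdNorm f E n * bwdNorm f F n ≤ Real.exp (-(2 * η)))
    -- a forward E-Pliss index m ≥ 0
    (m : ℤ) (hm : 0 ≤ m)
    (hfwd : ∀ k : ℕ, 1 ≤ k →
      ∏ i ∈ Finset.range k, fwdNorm f E (m + (i : ℤ)) ≤ Real.exp (-(k : ℝ) * η))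
    -- a backward F-Pliss index m' ≤ 0
    (m' : ℤ) (hm' : m' ≤ 0)
    (hbwd : ∀ k : ℕ, 1 ≤ k →
      ∏ i ∈ Finset.range k, bwdNorm f F (m' - (i : ℤ) - 1) ≤ Real.exp (-(k : ℝ) * η)) :
    ∃ j : ℤ,
      (∀ k : ℕ, 1 ≤ k →
        ∏ i ∈ Finset.range k, fwdNorm f E (j + (i : ℤ)) ≤ Real.exp (-(k : ℝ) * η)) ∧
      (∀ k : ℕ, 1 ≤ k →
        ∏ i ∈ Finset.range k, bwdNorm f F (j - (i : ℤ) - 1) ≤ Real.exp (-(k : ℝ) * η)) :=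
  exists_biPliss_index_general f E F η hdom m hm hfwd m' hm' hbwd
end

section
/- Let (a_n)_{n≥1} be a sequence of real numbers bounded above by some K such that limsup_{n→∞} (1/n) Σ_{i=1}^n a_i ≤ -η₀ < 0. Then for every η ∈ (0, η₀) there exist infinitely many indices m such that Σ_{i=m+1}^{m+k} a_i ≤ -kη for all k ≥ 1. -/
/-!
Put `B n = ∑_{i ≤ n} a_i + n η`. Since the averages of `a` are eventually below some `c < -η`,
`B n → -∞`. Hence `B` attains its maximum over every tail `[m, ∞)`, and a point `p ≥ m` where
it does satisfies `∑_{i=p+1}^{p+k} a_i = B (p + k) - B p - k η ≤ -k η` for all `k`.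
-/

open Filter Finset

theorem Finset.sum_Icc_add_sum_Icc_consecutive {M : Type*} [AddCommMonoid M] (f : ℕ → M)
    {a b c : ℕ} (hab : a ≤ b + 1) (hbc : b ≤ c) :
    ∑ i ∈ Icc a b, f i + ∑ i ∈ Icc (b + 1) c, f i = ∑ i ∈ Icc a c, f i := by
  simpa only [Finset.Ico_add_one_right_eq_Icc] using
    sum_Ico_consecutive f hab (Nat.add_le_add_right hbc 1)

theorem exists_ge_forall_add_le_of_tendsto_atBot {β : Type*} [LinearOrder β] {B : ℕ → β}
    (hB : Tendsto B atTop atBot) (m : ℕ) : ∃ p ≥ m, ∀ k, B (p + k) ≤ B p := by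
  have hB_tail : Tendsto (fun j => B (m + j)) cofinite atBot := by
    rw [Nat.cofinite_eq_atTop]
    exact hB.comp (tendsto_atTop_mono (Nat.le_add_left · m) tendsto_id)
  obtain ⟨j, hj⟩ := hB_tail.exists_forall_ge
  exact ⟨m + j, Nat.le_add_right m j, fun k => by simpa only [Nat.add_assoc] using hj (j + k)⟩

theorem setOf_forall_add_le_infinite_of_tendsto_atBot {β : Type*} [LinearOrder β] {B : ℕ → β}
    (hB : Tendsto B atTop atBot) : {p | ∀ k, B (p + k) ≤ B p}.Infinite :=
  Set.infinite_of_forall_exists_gt fun m =>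
    let ⟨p, hp, hmax⟩ := exists_ge_forall_add_le_of_tendsto_atBot hB (m + 1)
    ⟨p, hmax, hp⟩

theorem average_sum_Icc_le_max {a : ℕ → ℝ} {K : ℝ} (hK : ∀ n, a n ≤ K) (n : ℕ) :
    (n : ℝ)⁻¹ * ∑ i ∈ Icc 1 n, a i ≤ max K 0 := by
  rcases Nat.eq_zero_or_pos n with rfl | hn
  · simp
  have hsum : ∑ i ∈ Icc 1 n, a i ≤ n * K := by
    simpa using sum_le_sum fun i (_ : i ∈ Icc 1 n) => hK i
  calc (n : ℝ)⁻¹ * ∑ i ∈ Icc 1 n, a i ≤ (n : ℝ)⁻¹ * (n * K) := by gcongr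
    _ = K := by field_simp
    _ ≤ max K 0 := le_max_left K 0

theorem tendsto_add_mul_atBot_of_limsup_lt {s : ℕ → ℝ} {η : ℝ}
    (hbdd : IsBoundedUnder (· ≤ ·) atTop fun n : ℕ => (n : ℝ)⁻¹ * s n)
    (hlim : limsup (fun n : ℕ => (n : ℝ)⁻¹ * s n) atTop < -η) :
    Tendsto (fun n : ℕ => s n + n * η) atTop atBot := by
  obtain ⟨c, hlim_c, hc⟩ := exists_between hlim
  have hlinear : Tendsto (fun n : ℕ => (n : ℝ) * (c + η)) atTop atBot :=
    tendsto_natCast_atTop_atTop.atTop_mul_const_of_neg (by linarith)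
  refine tendsto_atBot_mono' atTop ?_ hlinear
  filter_upwards [eventually_lt_of_limsup_lt hlim_c hbdd, eventually_ge_atTop 1] with n hn hn1
  have hn_pos : (0 : ℝ) < n := by exact_mod_cast hn1
  calc s n + n * η = n * ((n : ℝ)⁻¹ * s n + η) := by field_simp
    _ ≤ n * (c + η) := by gcongr

theorem pliss_lemma_general (a : ℕ → ℝ) (K η₀ : ℝ)
    (hK : ∀ n, a n ≤ K)
    (hlim : Filter.limsup (fun n : ℕ => (n : ℝ)⁻¹ * ∑ i ∈ Finset.Icc 1 n, a i)
      Filter.atTop ≤ -η₀) :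
    ∀ η : ℝ, 0 < η → η < η₀ →
      {m : ℕ | ∀ k : ℕ, 1 ≤ k →
        ∑ i ∈ Finset.Icc (m + 1) (m + k), a i ≤ -(k : ℝ) * η}.Infinite := by
  intro η _ hηη₀
  have hB : Tendsto (fun n : ℕ => ∑ i ∈ Icc 1 n, a i + n * η) atTop atBot :=
    tendsto_add_mul_atBot_of_limsup_lt
      (isBoundedUnder_of ⟨max K 0, average_sum_Icc_le_max hK⟩) (by linarith)
  refine (setOf_forall_add_le_infinite_of_tendsto_atBot hB).mono fun p hp k _ => ?_
  have hpk := hp k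
  rw [← sum_Icc_add_sum_Icc_consecutive a (Nat.le_add_left 1 p) (Nat.le_add_right p k)] at hpk
  push_cast at hpk
  linarith

/-- Pliss's lemma: if `(a_n)_{n≥1}` is bounded above by `K` and
`limsup (1/n) Σ_{i=1}^n a_i ≤ -η₀ < 0`, then for every `η ∈ (0, η₀)` there are infinitely
many indices `m` such that `Σ_{i=m+1}^{m+k} a_i ≤ -kη` for all `k ≥ 1`. -/
theorem pliss_lemma (a : ℕ → ℝ) (K η₀ : ℝ) (hη₀ : 0 < η₀)
    (hK : ∀ n, a n ≤ K)
    (hlim : Filter.limsup (fun n : ℕ => (n : ℝ)⁻¹ * ∑ i ∈ Finset.Icc 1 n, a i)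
      Filter.atTop ≤ -η₀) :
    ∀ η : ℝ, 0 < η → η < η₀ →
      {m : ℕ | ∀ k : ℕ, 1 ≤ k →
        ∑ i ∈ Finset.Icc (m + 1) (m + k), a i ≤ -(k : ℝ) * η}.Infinite :=
  pliss_lemma_general a K η₀ hK hlim
end

section
/- Under the hypotheses of the previous time estimates, if moreover the function s ↦ g(s) := log|det Ψ̂_1|_{N̂^u(φ̂_s(x̂))}| is (ε/2)-close to λ^{uu} for s ∈ [a₁,b₁] and (ε/2)-close to λ^c for s ∈ [a₂,b₂], and |g| is bounded by a constant on the remaining bounded-length set, then there exist C = (λ^c + λ^{uu})/2 > 0 and t₀ > 0 such that for every t ∈ [a + t₀, b]: ∫_a^t g(s) ds > C·(t − a). -/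
open Set MeasureTheory

set_option maxHeartbeats 1600000 in
/-- under the hypotheses of the Lorenz-passage time estimates, if moreover
`g(s) = log|det Ψ̂₁|_{N̂^u(φ̂_s x̂)}|` is `(ε/2)`-close to `λ^{uu}` on `[a₁,b₁]`,
`(ε/2)`-close to `λ^c` on `[a₂,b₂]`, and bounded on the remaining set of bounded length,
then with `C = (λ^c + λ^{uu})/2 > 0` there is `t₀ > 0` such that
`∫_a^t g(s) ds > C (t − a)` for every `t ∈ [a + t₀, b]`. -/
theorem lorenz_passage_jacobian_integral
    (lamc lamuu ε Kg ℓ : ℝ)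
    (hlamc : lamc < 0) (hlamuu : 0 < lamuu) (hcenter : -lamc < lamuu)
    (hε : 0 < ε) (hε3 : ε < (lamc + lamuu) / 3)
    (hKg : 0 ≤ Kg) (hℓ : 0 ≤ ℓ)
    (a b a₁ b₁ a₂ b₂ : ℝ)
    (h1 : a ≤ a₁) (h2 : a₁ ≤ b₁) (h3 : b₁ ≤ a₂) (h4 : a₂ ≤ b₂) (h5 : b₂ ≤ b)
    (hlen : (a₁ - a) + (a₂ - b₁) + (b - b₂) ≤ ℓ)
    -- the conclusions of the time estimates (Statement 17), holding from time t₁ on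
    (t₁ : ℝ) (ht₁ : 0 < t₁)
    (hbounds : ∀ t ∈ Icc (a + t₁) b,
      ((lamuu - ε) / (-lamc + lamuu)) * (t - a) ≤ b₁ - a₁ ∧
      t - a₂ ≤ ((-lamc + ε) / (-lamc + lamuu)) * (t - a))
    -- the function g
    (g : ℝ → ℝ)
    (hgint : IntervalIntegrable g volume a b)
    (hg1 : ∀ s ∈ Icc a₁ b₁, |g s - lamuu| ≤ ε / 2)
    (hg2 : ∀ s ∈ Icc a₂ b₂, |g s - lamc| ≤ ε / 2)
    (hgbdd : ∀ s ∈ Icc a b, |g s| ≤ Kg) :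
    0 < (lamc + lamuu) / 2 ∧
    ∃ t₀ : ℝ, 0 < t₀ ∧ ∀ t ∈ Icc (a + t₀) b,
      ((lamc + lamuu) / 2) * (t - a) < ∫ s in a..t, g s := by
  have hsum : 0 < lamc + lamuu := by linarith
  have hD0 : (0:ℝ) < -lamc + lamuu := by linarith
  set D : ℝ := -lamc + lamuu with hDdef
  have hDne : (-lamc + lamuu) ≠ 0 := by rw [← hDdef]; exact hD0.ne'
  have hδ : (0:ℝ) < (lamc + lamuu) / 2 - 3 * ε / 2 := by linarith
  set δ : ℝ := (lamc + lamuu) / 2 - 3 * ε / 2 with hδdef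
  have hεD : ε < D := by simp only [hDdef]; linarith
  have hDε1 : (1:ℝ) ≤ D / ε := (one_le_div hε).mpr hεD.le
  have hDεℓ : ℓ ≤ (D / ε) * ℓ := by nlinarith
  have hDεℓ0 : 0 ≤ (D / ε) * ℓ := le_trans hℓ hDεℓ
  have hKδ0 : 0 < (Kg * ℓ + 1) / δ := by positivity
  refine ⟨by linarith, t₁ + (D / ε) * ℓ + (Kg * ℓ + 1) / δ, by linarith, ?_⟩
  intro t ht
  obtain ⟨hta, htb⟩ := ht
  have hab : a ≤ b := by linarith
  have hat : a ≤ t := by linarith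
  -- basic consequences about t
  have hta' : (D / ε) * ℓ ≤ t - a := by linarith
  have hεta : D * ℓ ≤ ε * (t - a) := by
    have h1' : ε * ((D / ε) * ℓ) ≤ ε * (t - a) := mul_le_mul_of_nonneg_left hta' hε.le
    calc D * ℓ = ε * ((D / ε) * ℓ) := by field_simp
      _ ≤ ε * (t - a) := h1'
  have ha₁t : a₁ ≤ t := by
    have : a₁ - a ≤ ℓ := by linarith
    linarith
  have hbt : t ∈ Icc (a + t₁) b := ⟨by linarith, htb⟩
  obtain ⟨hb1, hb2⟩ := hbounds t hbt
  -- cut points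
  set c2 : ℝ := min t b₁ with hc2
  set c3 : ℝ := min t a₂ with hc3
  set c4 : ℝ := min t b₂ with hc4
  have h12 : a₁ ≤ c2 := le_min ha₁t h2
  have h23 : c2 ≤ c3 := min_le_min le_rfl h3
  have h34 : c3 ≤ c4 := min_le_min le_rfl h4
  have h4t : c4 ≤ t := min_le_left _ _
  have hc2b : c2 ≤ b := le_trans (min_le_left _ _) htb
  have hc3b : c3 ≤ b := le_trans (min_le_left _ _) htb
  have hc4b : c4 ≤ b := le_trans (min_le_left _ _) htb
  have hac2 : a ≤ c2 := le_trans h1 h12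
  have hac3 : a ≤ c3 := le_trans hac2 h23
  have hac4 : a ≤ c4 := le_trans hac3 h34
  -- integrability on subintervals
  have hInt : ∀ p q : ℝ, p ∈ Icc a b → q ∈ Icc a b → IntervalIntegrable g volume p q := by
    intro p q hp hq
    refine hgint.mono_set ?_
    exact uIcc_subset_uIcc (by rw [uIcc_of_le hab]; exact hp)
      (by rw [uIcc_of_le hab]; exact hq)
  have hI1 : IntervalIntegrable g volume a a₁ := hInt a a₁ ⟨le_rfl, hab⟩ ⟨h1, by linarith⟩
  have hI2 : IntervalIntegrable g volume a₁ c2 := hInt a₁ c2 ⟨h1, by linarith⟩ ⟨hac2, hc2b⟩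
  have hI3 : IntervalIntegrable g volume c2 c3 := hInt c2 c3 ⟨hac2, hc2b⟩ ⟨hac3, hc3b⟩
  have hI4 : IntervalIntegrable g volume c3 c4 := hInt c3 c4 ⟨hac3, hc3b⟩ ⟨hac4, hc4b⟩
  have hI5 : IntervalIntegrable g volume c4 t := hInt c4 t ⟨hac4, hc4b⟩ ⟨hat, htb⟩
  have hI12 : IntervalIntegrable g volume a c2 := hInt a c2 ⟨le_rfl, hab⟩ ⟨hac2, hc2b⟩
  have hI123 : IntervalIntegrable g volume a c3 := hInt a c3 ⟨le_rfl, hab⟩ ⟨hac3, hc3b⟩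
  have hI1234 : IntervalIntegrable g volume a c4 := hInt a c4 ⟨le_rfl, hab⟩ ⟨hac4, hc4b⟩
  -- lower bound helper
  have hLB : ∀ p q m : ℝ, p ≤ q → IntervalIntegrable g volume p q →
      (∀ s ∈ Icc p q, m ≤ g s) → m * (q - p) ≤ ∫ s in p..q, g s := by
    intro p q m hpq hint hm
    have := intervalIntegral.integral_mono_on (μ := volume) (f := fun _ => m) (g := g)
      hpq intervalIntegrable_const hint hm
    simpa [intervalIntegral.integral_const, smul_eq_mul, mul_comm] using this
  -- splitting of the integral
  have E : (∫ s in a..a₁, g s) + (∫ s in a₁..c2, g s) + (∫ s in c2..c3, g s)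
      + (∫ s in c3..c4, g s) + (∫ s in c4..t, g s) = ∫ s in a..t, g s := by
    rw [intervalIntegral.integral_add_adjacent_intervals hI1 hI2,
        intervalIntegral.integral_add_adjacent_intervals hI12 hI3,
        intervalIntegral.integral_add_adjacent_intervals hI123 hI4,
        intervalIntegral.integral_add_adjacent_intervals hI1234 hI5]
  -- estimates on the five pieces
  have J1 : -Kg * (a₁ - a) ≤ ∫ s in a..a₁, g s := by
    refine hLB a a₁ (-Kg) h1 hI1 ?_
    intro s hs
    have := hgbdd s ⟨hs.1, le_trans hs.2 (by linarith)⟩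
    rw [abs_le] at this; linarith [this.1]
  have J2 : (lamuu - ε / 2) * (c2 - a₁) ≤ ∫ s in a₁..c2, g s := by
    refine hLB a₁ c2 _ h12 hI2 ?_
    intro s hs
    have := hg1 s ⟨hs.1, le_trans hs.2 (min_le_right _ _)⟩
    rw [abs_le] at this; linarith [this.1]
  have J3 : -Kg * (c3 - c2) ≤ ∫ s in c2..c3, g s := by
    refine hLB c2 c3 (-Kg) h23 hI3 ?_
    intro s hs
    have := hgbdd s ⟨le_trans hac2 hs.1, le_trans hs.2 hc3b⟩
    rw [abs_le] at this; linarith [this.1]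
  have J4 : (lamc - ε / 2) * (c4 - c3) ≤ ∫ s in c3..c4, g s := by
    rcases le_or_gt a₂ t with h | h
    · refine hLB c3 c4 _ h34 hI4 ?_
      intro s hs
      have hs1 : a₂ ≤ s := by
        have he : c3 = a₂ := min_eq_right h
        rw [he] at hs; exact hs.1
      have := hg2 s ⟨hs1, le_trans hs.2 (min_le_right _ _)⟩
      rw [abs_le] at this; linarith [this.1]
    · have e3 : c3 = t := min_eq_left h.le
      have e4 : c4 = t := min_eq_left (le_trans h.le h4)
      rw [e3, e4]; simp
  have J5 : -Kg * (t - c4) ≤ ∫ s in c4..t, g s := by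
    refine hLB c4 t (-Kg) h4t hI5 ?_
    intro s hs
    have := hgbdd s ⟨le_trans hac4 hs.1, le_trans hs.2 htb⟩
    rw [abs_le] at this; linarith [this.1]
  -- length estimates
  have L2 : ((lamuu - ε) / D) * (t - a) ≤ c2 - a₁ := by
    rcases le_or_gt b₁ t with h | h
    · have he : c2 = b₁ := min_eq_right h
      rw [he]; exact hb1
    · have e2 : c2 = t := min_eq_left h.le
      rw [e2, div_mul_eq_mul_div, div_le_iff₀ hD0]
      have hℓa : a₁ - a ≤ ℓ := by linarith
      have hA : D * (a₁ - a) ≤ D * ℓ := mul_le_mul_of_nonneg_left hℓa hD0.le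
      have hB : D * (a₁ - a) ≤ ε * (t - a) := le_trans hA hεta
      have hC : 0 ≤ (t - a) * (-lamc) := mul_nonneg (by linarith) (by linarith)
      have hE2 : (t - a₁) * D = (t - a) * D - D * (a₁ - a) := by ring
      have hF : (t - a) * D = (t - a) * (-lamc) + (t - a) * lamuu := by
        rw [hDdef]; ring
      linarith
  have L4a : c4 - c3 ≤ ((-lamc + ε) / D) * (t - a) := by
    rcases le_or_gt a₂ t with h | h
    · have e3 : c3 = a₂ := min_eq_right h
      calc c4 - c3 ≤ t - a₂ := by rw [e3]; linarith [h4t]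
        _ ≤ ((-lamc + ε) / D) * (t - a) := hb2
    · have e3 : c3 = t := min_eq_left h.le
      have e4 : c4 = t := min_eq_left (le_trans h.le h4)
      rw [e3, e4]
      have : 0 ≤ ((-lamc + ε) / D) * (t - a) := by
        apply mul_nonneg _ (by linarith)
        apply div_nonneg (by linarith)
        rw [hDdef] at hD0 ⊢; linarith
      linarith
  -- bad lengths
  have Lb2 : c3 - c2 ≤ a₂ - b₁ := by
    rcases le_total t b₁ with h | h
    · have e2 : c2 = t := min_eq_left h
      have e3 : c3 = t := min_eq_left (le_trans h h3)
      rw [e2, e3]; linarith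
    · have e2 : c2 = b₁ := min_eq_right h
      rw [e2]; linarith [min_le_right t a₂]
  have Lb3 : t - c4 ≤ b - b₂ := by
    rcases le_total t b₂ with h | h
    · have e4 : c4 = t := min_eq_left h
      rw [e4]; linarith
    · have e4 : c4 = b₂ := min_eq_right h
      rw [e4]; linarith
  -- combine bad pieces
  have hbadlen : (a₁ - a) + (c3 - c2) + (t - c4) ≤ ℓ := by linarith
  have hKbad : -Kg * ℓ ≤ -Kg * (a₁ - a) + -Kg * (c3 - c2) + -Kg * (t - c4) := by
    have := mul_le_mul_of_nonneg_left hbadlen hKg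
    linarith
  have hu : (lamuu - ε / 2) * (((lamuu - ε) / D) * (t - a)) ≤ (lamuu - ε / 2) * (c2 - a₁) :=
    mul_le_mul_of_nonneg_left L2 (by linarith)
  have hc : (lamc - ε / 2) * (((-lamc + ε) / D) * (t - a)) ≤ (lamc - ε / 2) * (c4 - c3) :=
    mul_le_mul_of_nonpos_left L4a (by linarith)
  have key : (lamuu - ε / 2) * ((lamuu - ε) / D) + (lamc - ε / 2) * ((-lamc + ε) / D)
      = lamc + lamuu - 3 * ε / 2 := by
    rw [hDdef]
    field_simp
    ring
  have key2 : (lamuu - ε / 2) * (((lamuu - ε) / D) * (t - a))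
      + (lamc - ε / 2) * (((-lamc + ε) / D) * (t - a))
      = (lamc + lamuu - 3 * ε / 2) * (t - a) := by
    calc (lamuu - ε / 2) * (((lamuu - ε) / D) * (t - a))
        + (lamc - ε / 2) * (((-lamc + ε) / D) * (t - a))
        = ((lamuu - ε / 2) * ((lamuu - ε) / D)
          + (lamc - ε / 2) * ((-lamc + ε) / D)) * (t - a) := by ring
      _ = (lamc + lamuu - 3 * ε / 2) * (t - a) := by rw [key]
  have hfin : (lamc + lamuu - 3 * ε / 2) * (t - a) - Kg * ℓ ≤ ∫ s in a..t, g s := by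
    rw [← E]; linarith
  clear_value D δ c2 c3 c4
  -- final strict inequality
  have hδt : Kg * ℓ < δ * (t - a) := by
    have h1' : δ * ((Kg * ℓ + 1) / δ) = Kg * ℓ + 1 := by field_simp [hδ.ne']
    have h2' : (Kg * ℓ + 1) / δ ≤ t - a := by linarith
    have h3' : δ * ((Kg * ℓ + 1) / δ) ≤ δ * (t - a) := mul_le_mul_of_nonneg_left h2' hδ.le
    linarith
  have hid : (lamc + lamuu - 3 * ε / 2) * (t - a)
      = (lamc + lamuu) / 2 * (t - a) + δ * (t - a) := by
    rw [hδdef]; ring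
  linarith
end
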